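/- arXiv:0804.1026 — 4 statements merged into one kernel-verified Lean document; each statement's English description precedes it below -/
import Mathlib

section
/- Let $\{\lambda_p\}_{p\geq 1}$ be a non-increasing sequence of non-negative real numbers and let $\alpha>0$ with $\sum_{p\geq 1}\lambda_p^\alpha<\infty$. Then for any $\beta\geq\alpha$, $\sup_{\gamma>0}\ \gamma^\alpha \sum_{p=1}^\infty \lambda_p^\beta(\lambda_p+\gamma)^{-\beta} \leq 2\sum_{p=1}^\infty \lambda_p^\alpha$. -/
/-!
Termwise, `λ^β (λ + γ)^(-β) = (λ/(λ+γ))^β ≤ (λ/(λ+γ))^α` because `λ/(λ+γ) ∈ [0, 1]` and `α ≤ β`,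
and `γ · λ/(λ+γ) ≤ λ`; so each term of the left-hand series is at most `λ^α`, which bounds the
supremum even by `∑ λ_p^α`.
-/

open Real

theorem rpow_mul_rpow_mul_add_rpow_neg_le {x γ α β : ℝ} (hx : 0 ≤ x) (hγ : 0 < γ)
    (hα : 0 ≤ α) (hαβ : α ≤ β) :
    γ ^ α * (x ^ β * (x + γ) ^ (-β)) ≤ x ^ α := by
  have hxγ : 0 < x + γ := by linarith
  have hratio_nonneg : 0 ≤ x / (x + γ) := div_nonneg hx hxγ.le
  have hratio_le_one : x / (x + γ) ≤ 1 := (div_le_one hxγ).2 (by linarith)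
  have hscaled : γ * (x / (x + γ)) ≤ x := by
    rw [mul_div_assoc', div_le_iff₀ hxγ]
    nlinarith
  calc γ ^ α * (x ^ β * (x + γ) ^ (-β))
      = γ ^ α * (x / (x + γ)) ^ β := by
        rw [div_rpow hx hxγ.le, rpow_neg hxγ.le, div_eq_mul_inv]
    _ ≤ γ ^ α * (x / (x + γ)) ^ α := by
        gcongr ?_ * ?_
        exact rpow_le_rpow_of_exponent_ge' hratio_nonneg hratio_le_one hα hαβ
    _ = (γ * (x / (x + γ))) ^ α := (mul_rpow hγ.le hratio_nonneg).symm
    _ ≤ x ^ α := by gcongr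

theorem stmt_0_general (lam : ℕ → ℝ) (hnonneg : ∀ p, 0 ≤ lam p)
    (α : ℝ) (hα : 0 < α) (hsum : Summable fun p => lam p ^ α)
    (β : ℝ) (hβ : α ≤ β) :
    ∀ γ : ℝ, 0 < γ →
      γ ^ α * ∑' p, lam p ^ β * (lam p + γ) ^ (-β : ℝ) ≤ 2 * ∑' p, lam p ^ α := by
  intro γ hγ
  have hterm p : γ ^ α * (lam p ^ β * (lam p + γ) ^ (-β)) ≤ lam p ^ α :=
    rpow_mul_rpow_mul_add_rpow_neg_le (hnonneg p) hγ hα.le hβ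
  have hterm_nonneg p : 0 ≤ γ ^ α * (lam p ^ β * (lam p + γ) ^ (-β)) := by
    have := hnonneg p
    positivity
  have htsum_nonneg : 0 ≤ ∑' p, lam p ^ α := tsum_nonneg fun p => rpow_nonneg (hnonneg p) α
  calc γ ^ α * ∑' p, lam p ^ β * (lam p + γ) ^ (-β)
      = ∑' p, γ ^ α * (lam p ^ β * (lam p + γ) ^ (-β)) := tsum_mul_left.symm
    _ ≤ ∑' p, lam p ^ α := (hsum.of_nonneg_of_le hterm_nonneg hterm).tsum_le_tsum hterm hsum
    _ ≤ 2 * ∑' p, lam p ^ α := by linarith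

/-- For a non-increasing non-negative sequence `λ` with `∑ λ_p^α < ∞` and
`β ≥ α`, for every `γ > 0` one has
`γ^α * ∑_p λ_p^β (λ_p+γ)^(-β) ≤ 2 ∑_p λ_p^α`. -/
theorem stmt_0 (lam : ℕ → ℝ) (hmono : Antitone lam) (hnonneg : ∀ p, 0 ≤ lam p)
    (α : ℝ) (hα : 0 < α) (hsum : Summable fun p => lam p ^ α)
    (β : ℝ) (hβ : α ≤ β) :
    ∀ γ : ℝ, 0 < γ →
      γ ^ α * ∑' p, lam p ^ β * (lam p + γ) ^ (-β : ℝ) ≤ 2 * ∑' p, lam p ^ α :=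
  stmt_0_general lam hnonneg α hα hsum β hβ
end

section
/- Let $S$ be a positive self-adjoint trace-class operator on a separable Hilbert space with eigenvalues $\{\lambda_p\}$ and eigenvectors $\{e_p\}$, and let $\gamma>0$. Define $d_1(T,\gamma)=\mathrm{Tr}((T+\gamma I)^{-1}T)$. If $\Delta$ is a self-adjoint trace-class perturbation with $\|(S+\gamma I)^{-1}\Delta\|<1$ and $\sum_{p=1}^\infty \|\Delta e_p\| < \gamma$, then $|d_1(S+\Delta,\gamma)-d_1(S,\gamma)| \leq \frac{\gamma^{-1}\sum_p\|\Delta e_p\|}{1-\gamma^{-1}\sum_p\|\Delta e_p\|}$. -/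
/-!
Write `T = S + Δ` and `R = (T + γ)⁻¹`. From `R (T + γ) = 1` and `S e_p = λ_p e_p` one gets, for
each basis vector, `⟪e_p, R T e_p⟫ - λ_p / (λ_p + γ) = γ / (λ_p + γ) · ⟪e_p, R Δ e_p⟫`.
Since `S ≥ 0` and `‖Δ‖ ≤ t := ∑_p ‖Δ e_p‖ < γ`, the operator `T + γ` is bounded below by `γ - t`,
so `‖R‖ ≤ (γ - t)⁻¹`. Each diagonal difference is therefore at most `(γ - t)⁻¹ ‖Δ e_p‖`, and
summing over `p` gives `(γ - t)⁻¹ t = γ⁻¹ t / (1 - γ⁻¹ t)`.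
-/

open RealInnerProductSpace

theorem ContinuousLinearMap.norm_apply_le_of_comp_eq_one {𝕜 E F : Type*}
    [NontriviallyNormedField 𝕜] [NormedAddCommGroup E] [NormedSpace 𝕜 E] [NormedAddCommGroup F]
    [NormedSpace 𝕜 F] {T : E →L[𝕜] F} {R : F →L[𝕜] E} {c : ℝ}
    (hc : 0 < c) (hT : ∀ x, c * ‖x‖ ≤ ‖T x‖) (hTR : T ∘L R = 1) (y : F) :
    ‖R y‖ ≤ c⁻¹ * ‖y‖ := by
  have hy : T (R y) = y := by simpa using congrArg (fun f : F →L[𝕜] F => f y) hTR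
  rw [inv_mul_eq_div, le_div_iff₀ hc, mul_comm]
  simpa only [hy] using hT (R y)

theorem abs_tsum_sub_tsum_le {ι : Type*} {f g a : ι → ℝ} {c : ℝ}
    (hfg : ∀ i, |f i - g i| ≤ c * a i) (ha : Summable a) (hg : Summable g) :
    |∑' i, f i - ∑' i, g i| ≤ c * ∑' i, a i := by
  have hd : Summable fun i => f i - g i := (ha.mul_left c).of_norm_bounded hfg
  have hf : Summable f := by simpa using hd.add hg
  rw [← hf.tsum_sub hg, ← tsum_mul_left, ← Real.norm_eq_abs]
  exact (norm_tsum_le_tsum_norm hd.norm).trans (hd.norm.tsum_le_tsum hfg (ha.mul_left c))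

namespace HilbertBasis

variable {ι 𝕜 H F : Type*} [RCLike 𝕜] [NormedAddCommGroup H] [InnerProductSpace 𝕜 H]
  [NormedAddCommGroup F] [NormedSpace 𝕜 F]

theorem norm_apply_le_tsum_norm_apply_mul (e : HilbertBasis ι 𝕜 H) {T : H →L[𝕜] F}
    (hT : Summable fun i => ‖T (e i)‖) (x : H) : ‖T x‖ ≤ (∑' i, ‖T (e i)‖) * ‖x‖ := by
  have hTx : HasSum (fun i => e.repr x i • T (e i)) (T x) := by
    simpa using (e.hasSum_repr x).mapL T
  have hle : ∀ i, ‖e.repr x i • T (e i)‖ ≤ ‖T (e i)‖ * ‖x‖ := fun i => by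
    rw [norm_smul, mul_comm]
    gcongr
    simpa [e.repr_apply_apply, e.orthonormal.1 i] using norm_inner_le_norm (𝕜 := 𝕜) (e i) x
  rw [← tsum_mul_right]
  exact hTx.norm_le_of_bounded (hT.mul_right _).hasSum hle

end HilbertBasis

section RealInnerProductSpace

variable {ι H : Type*} [NormedAddCommGroup H] [InnerProductSpace ℝ H]

theorem HilbertBasis.inner_apply_nonneg_of_apply_eq_smul (e : HilbertBasis ι ℝ H)
    {S : H →L[ℝ] H} {lam : ι → ℝ} (hlam : ∀ i, 0 ≤ lam i) (heig : ∀ i, S (e i) = lam i • e i)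
    (x : H) : 0 ≤ ⟪x, S x⟫ := by
  have hSx : HasSum (fun i => ⟪e i, x⟫ • S (e i)) (S x) := by
    simpa [e.repr_apply_apply] using (e.hasSum_repr x).mapL S
  refine (hSx.mapL (innerSL ℝ x)).nonneg fun i => ?_
  simp only [innerSL_apply_apply, heig, smul_smul, inner_smul_right, real_inner_comm x]
  nlinarith [mul_nonneg (hlam i) (mul_self_nonneg ⟪x, e i⟫)]

theorem mul_norm_le_norm_add_smul_one_apply {A : H →L[ℝ] H} (hA : ∀ x, 0 ≤ ⟪x, A x⟫)
    (γ : ℝ) (x : H) : γ * ‖x‖ ≤ ‖(A + γ • (1 : H →L[ℝ] H)) x‖ := by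
  rcases (norm_nonneg x).eq_or_lt with hx | hx
  · rw [← hx, mul_zero]
    exact norm_nonneg _
  have hquad : γ * ‖x‖ ^ 2 ≤ ⟪x, (A + γ • (1 : H →L[ℝ] H)) x⟫ := by
    simp only [add_apply, smul_apply, one_apply_eq_self, inner_add_right, real_inner_smul_right,
      real_inner_self_eq_norm_sq]
    linarith [hA x]
  nlinarith [real_inner_le_norm x ((A + γ • (1 : H →L[ℝ] H)) x)]

theorem norm_resolvent_apply_le {A Δ R : H →L[ℝ] H} (hA : ∀ x, 0 ≤ ⟪x, A x⟫) {t γ : ℝ}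
    (htγ : t < γ) (hΔ : ∀ x, ‖Δ x‖ ≤ t * ‖x‖)
    (hR : (A + Δ + γ • (1 : H →L[ℝ] H)) ∘L R = 1) (y : H) : ‖R y‖ ≤ (γ - t)⁻¹ * ‖y‖ := by
  refine ContinuousLinearMap.norm_apply_le_of_comp_eq_one (sub_pos.2 htγ) (fun x => ?_) hR y
  have hsplit : (A + Δ + γ • (1 : H →L[ℝ] H)) x = (A + γ • (1 : H →L[ℝ] H)) x + Δ x := by
    simp only [add_apply]
    abel
  rw [hsplit]
  linarith [norm_sub_le_norm_add ((A + γ • (1 : H →L[ℝ] H)) x) (Δ x),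
    mul_norm_le_norm_add_smul_one_apply hA γ x, hΔ x]

theorem inner_resolvent_comp_apply_sub_eq {S Δ R : H →L[ℝ] H} {γ μ : ℝ} {v : H}
    (hR : R ∘L (S + Δ + γ • (1 : H →L[ℝ] H)) = 1) (hv : S v = μ • v) (hv1 : ‖v‖ = 1)
    (hμγ : μ + γ ≠ 0) :
    ⟪v, (R ∘L (S + Δ)) v⟫ - μ / (μ + γ) = γ / (μ + γ) * ⟪v, R (Δ v)⟫ := by
  have hRv : R ((S + Δ) v) + γ • R v = v := by
    simpa using congrArg (fun f : H →L[ℝ] H => f v) hR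
  have hRSv : (μ + γ) • R v + R (Δ v) = v := by
    rw [add_apply, hv, map_add, map_smul] at hRv
    rw [add_smul]
    convert hRv using 1
    abel
  have hvv : ⟪v, v⟫ = 1 := by rw [real_inner_self_eq_norm_sq, hv1, one_pow]
  have hR_comp : ⟪v, (R ∘L (S + Δ)) v⟫ = 1 - γ * ⟪v, R v⟫ := by
    rw [ContinuousLinearMap.comp_apply, ← hvv, ← real_inner_smul_right, ← inner_sub_right,
      eq_sub_of_add_eq hRv]
  have hRv_inner : (μ + γ) * ⟪v, R v⟫ + ⟪v, R (Δ v)⟫ = 1 := by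
    rw [← real_inner_smul_right, ← inner_add_right, hRSv, hvv]
  rw [hR_comp]
  field_simp
  linear_combination (-γ) * hRv_inner

theorem abs_inner_resolvent_comp_apply_sub_le {S Δ R : H →L[ℝ] H} {γ μ : ℝ} {v : H}
    (hR : R ∘L (S + Δ + γ • (1 : H →L[ℝ] H)) = 1) (hv : S v = μ • v) (hv1 : ‖v‖ = 1)
    (hμ : 0 ≤ μ) (hγ : 0 < γ) :
    |⟪v, (R ∘L (S + Δ)) v⟫ - μ / (μ + γ)| ≤ ‖R (Δ v)‖ := by
  have hμγ : 0 < μ + γ := add_pos_of_nonneg_of_pos hμ hγ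
  rw [inner_resolvent_comp_apply_sub_eq hR hv hv1 hμγ.ne', abs_mul, abs_div, abs_of_pos hγ,
    abs_of_pos hμγ]
  refine (mul_le_of_le_one_left (abs_nonneg _) ?_).trans ?_
  · exact (div_le_one hμγ).2 (le_add_of_nonneg_left hμ)
  · simpa [hv1] using abs_real_inner_le_norm v (R (Δ v))

end RealInnerProductSpace

theorem stmt_6_general
    {H : Type*} [NormedAddCommGroup H] [InnerProductSpace ℝ H]
    (S Δ : H →L[ℝ] H)
    (lam : ℕ → ℝ) (hlam : ∀ p, 0 ≤ lam p)
    (e : HilbertBasis ℕ ℝ H) (heig : ∀ p, S (e p) = lam p • e p)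
    (htrS : Summable lam)
    (γ : ℝ)
    (R : H →L[ℝ] H)
    (hR : (S + Δ + γ • (1 : H →L[ℝ] H)) ∘L R = 1 ∧ R ∘L (S + Δ + γ • (1 : H →L[ℝ] H)) = 1)
    (hcarlS : Summable fun p => ‖Δ (e p)‖)
    (hcarl : (∑' p, ‖Δ (e p)‖) < γ) :
    |(∑' p : ℕ, ⟪(e p : H), (R ∘L (S + Δ)) (e p)⟫) - ∑' p : ℕ, lam p / (lam p + γ)| ≤
      (γ⁻¹ * ∑' p, ‖Δ (e p)‖) / (1 - γ⁻¹ * ∑' p, ‖Δ (e p)‖) := by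
  set t := ∑' p, ‖Δ (e p)‖
  have ht : 0 ≤ t := tsum_nonneg fun p => norm_nonneg _
  have hγ : 0 < γ := ht.trans_lt hcarl
  have hR_le := norm_resolvent_apply_le (e.inner_apply_nonneg_of_apply_eq_smul hlam heig) hcarl
    (e.norm_apply_le_tsum_norm_apply_mul hcarlS) hR.1
  have hdiag p : |⟪(e p : H), (R ∘L (S + Δ)) (e p)⟫ - lam p / (lam p + γ)| ≤
      (γ - t)⁻¹ * ‖Δ (e p)‖ :=
    (abs_inner_resolvent_comp_apply_sub_le hR.2 (heig p) (e.orthonormal.1 p) (hlam p) hγ).trans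
      (hR_le _)
  have hsummable : Summable fun p => lam p / (lam p + γ) :=
    (htrS.div_const γ).of_nonneg_of_le (fun p => div_nonneg (hlam p) (by linarith [hlam p]))
      fun p => div_le_div_of_nonneg_left (hlam p) hγ (le_add_of_nonneg_left (hlam p))
  calc _ ≤ (γ - t)⁻¹ * t := abs_tsum_sub_tsum_le hdiag hcarlS hsummable
    _ = (γ⁻¹ * t) / (1 - γ⁻¹ * t) := by
      have : γ - t ≠ 0 := (sub_pos.2 hcarl).ne'
      field_simp

/-- perturbation bound for the degrees of freedom
`d₁(T,γ) = Tr((T+γI)⁻¹ T)`.  Here `S` is positive self-adjoint trace class with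
eigenbasis `e` and eigenvalues `lam` (so `d₁(S,γ) = ∑_p λ_p/(λ_p+γ)`),
`Δ` is a self-adjoint trace-class perturbation, `R` is the inverse of `S+Δ+γI`
and `RS` the inverse of `S+γI`; under `‖(S+γI)⁻¹ Δ‖ < 1` and
`∑_p ‖Δ e_p‖ < γ` one has
`|d₁(S+Δ,γ) - d₁(S,γ)| ≤ (γ⁻¹ ∑_p ‖Δ e_p‖)/(1 - γ⁻¹ ∑_p ‖Δ e_p‖)`. -/
theorem stmt_6
    {H : Type*} [NormedAddCommGroup H] [InnerProductSpace ℝ H] [CompleteSpace H]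
    (S Δ : H →L[ℝ] H) (hS : IsSelfAdjoint S) (hΔ : IsSelfAdjoint Δ)
    (lam : ℕ → ℝ) (hlam : ∀ p, 0 ≤ lam p)
    (e : HilbertBasis ℕ ℝ H) (heig : ∀ p, S (e p) = lam p • e p)
    (htrS : Summable lam)
    (γ : ℝ) (hγ : 0 < γ)
    (RS : H →L[ℝ] H)
    (hRS : (S + γ • (1 : H →L[ℝ] H)) ∘L RS = 1 ∧ RS ∘L (S + γ • (1 : H →L[ℝ] H)) = 1)
    (R : H →L[ℝ] H)
    (hR : (S + Δ + γ • (1 : H →L[ℝ] H)) ∘L R = 1 ∧ R ∘L (S + Δ + γ • (1 : H →L[ℝ] H)) = 1)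
    (hop : ‖RS ∘L Δ‖ < 1)
    (hcarlS : Summable fun p => ‖Δ (e p)‖)
    (hcarl : (∑' p, ‖Δ (e p)‖) < γ)
    (htr' : Summable fun p : ℕ => |⟪(e p : H), (R ∘L (S + Δ)) (e p)⟫|) :
    |(∑' p : ℕ, ⟪(e p : H), (R ∘L (S + Δ)) (e p)⟫) - ∑' p : ℕ, lam p / (lam p + γ)| ≤
      (γ⁻¹ * ∑' p, ‖Δ (e p)‖) / (1 - γ⁻¹ * ∑' p, ‖Δ (e p)‖) :=
  stmt_6_general S Δ lam hlam e heig htrS γ R hR hcarlS hcarl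
end

section
/- With the notation of the preceding context (two probabilities $\mathbb{P}_1,\mathbb{P}_2$ with densities relative to a dominating $\mathbb{Q}$, covariance operator $\Sigma$ of $\mathbb{Q}$ with positive eigenpairs $\{(\lambda_p,e_p)\}$), the inequality $\sum_{p=1}^\infty \lambda_p^{-1}\langle e_p,\mu_2-\mu_1\rangle_{\mathcal{H}}^2 \leq \|d\mathbb{P}_1/d\mathbb{Q} - d\mathbb{P}_2/d\mathbb{Q}\|_{L^2(\mathbb{Q})}^2$ holds (without assuming density of the RKHS in $L^2(\mathbb{Q})$). -/
open MeasureTheory RealInnerProductSpace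
open scoped ENNReal

/-!
Put `f_p = λ_p^{-1/2} (⟪e_p, Φ ·⟫ - Q⟪e_p, Φ ·⟫)` and `h = g₁ - g₂`. The covariance identity and
the eigen-relations make `(f_p)` orthonormal in `L²(Q)`. Since `h` integrates to `0` against `Q`,
the centering constant drops out and `∫ f_p h dQ = λ_p^{-1/2} ⟪e_p, μ₁ - μ₂⟫`, so the claim is
Bessel's inequality for `h` and the system `(f_p)`.
-/

section Bessel

variable {X : Type*} [MeasurableSpace X] {μ : Measure X}

lemma inner_toLp_toLp {f g : X → ℝ} (hf : MemLp f 2 μ) (hg : MemLp g 2 μ) :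
    ⟪hf.toLp f, hg.toLp g⟫ = ∫ x, f x * g x ∂μ := by
  rw [L2.inner_def]
  refine integral_congr_ae ?_
  filter_upwards [hf.coeFn_toLp, hg.coeFn_toLp] with x hfx hgx
  rw [hfx, hgx, RCLike.inner_apply, conj_trivial, mul_comm]

theorem tsum_ofReal_sq_integral_mul_le_lintegral_sq {ι : Type*} [DecidableEq ι]
    {f : ι → X → ℝ} (hf : ∀ i, MemLp (f i) 2 μ)
    (hortho : ∀ i j, ∫ x, f i x * f j x ∂μ = if i = j then 1 else 0)
    {h : X → ℝ} (hh : AEStronglyMeasurable h μ) :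
    ∑' i, ENNReal.ofReal ((∫ x, f i x * h x ∂μ) ^ 2) ≤ ∫⁻ x, ENNReal.ofReal (h x ^ 2) ∂μ := by
  by_cases htop : ∫⁻ x, ENNReal.ofReal (h x ^ 2) ∂μ = ∞
  · rw [htop]; exact le_top
  have hsq_nonneg : 0 ≤ᵐ[μ] fun x => h x ^ 2 := ae_of_all _ fun x => sq_nonneg (h x)
  have hsq : Integrable (fun x => h x ^ 2) μ :=
    (lintegral_ofReal_ne_top_iff_integrable (hh.pow 2) hsq_nonneg).1 htop
  have hL2 : MemLp h 2 μ := (memLp_two_iff_integrable_sq hh).2 hsq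
  have hv : Orthonormal ℝ fun i => (hf i).toLp (f i) := by
    rw [orthonormal_iff_ite]
    intro i j
    rw [inner_toLp_toLp, hortho]
  have hcoef (i : ι) :
      ‖⟪(hf i).toLp (f i), hL2.toLp h⟫‖ ^ 2 = (∫ x, f i x * h x ∂μ) ^ 2 := by
    rw [inner_toLp_toLp, Real.norm_eq_abs, sq_abs]
  have hnorm : ‖hL2.toLp h‖ ^ 2 = ∫ x, h x ^ 2 ∂μ := by
    rw [← real_inner_self_eq_norm_sq, inner_toLp_toLp]
    simp only [sq]
  calc ∑' i, ENNReal.ofReal ((∫ x, f i x * h x ∂μ) ^ 2)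
      = ENNReal.ofReal (∑' i, ‖⟪(hf i).toLp (f i), hL2.toLp h⟫‖ ^ 2) := by
        rw [ENNReal.ofReal_tsum_of_nonneg (fun i => by positivity) (hv.inner_products_summable _)]
        simp only [hcoef]
    _ ≤ ENNReal.ofReal (‖hL2.toLp h‖ ^ 2) :=
        ENNReal.ofReal_le_ofReal (hv.tsum_inner_products_le _)
    _ = ∫⁻ x, ENNReal.ofReal (h x ^ 2) ∂μ := by
        rw [hnorm, ofReal_integral_eq_lintegral_ofReal hsq hsq_nonneg]

end Bessel

section Density

variable {X : Type*} [MeasurableSpace X] {Q : Measure X} {g g₁ g₂ : X → ℝ}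

lemma integral_withDensity_ofReal (hg : Measurable g) (hg0 : ∀ x, 0 ≤ g x) (φ : X → ℝ) :
    ∫ x, φ x ∂Q.withDensity (fun x => ENNReal.ofReal (g x)) = ∫ x, g x * φ x ∂Q := by
  rw [integral_withDensity_eq_integral_toReal_smul hg.ennreal_ofReal
    (ae_of_all _ fun _ => ENNReal.ofReal_lt_top)]
  simp only [ENNReal.toReal_ofReal (hg0 _), smul_eq_mul]

lemma integrable_of_isProbabilityMeasure_withDensity (hg : Measurable g) (hg0 : ∀ x, 0 ≤ g x)
    [IsProbabilityMeasure (Q.withDensity fun x => ENNReal.ofReal (g x))] : Integrable g Q := by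
  refine (lintegral_ofReal_ne_top_iff_integrable hg.aestronglyMeasurable (ae_of_all _ hg0)).1 ?_
  rw [← setLIntegral_univ, ← withDensity_apply _ MeasurableSet.univ, measure_univ]
  exact ENNReal.one_ne_top

lemma integral_eq_one_of_isProbabilityMeasure_withDensity (hg : Measurable g)
    (hg0 : ∀ x, 0 ≤ g x) [IsProbabilityMeasure (Q.withDensity fun x => ENNReal.ofReal (g x))] :
    ∫ x, g x ∂Q = 1 := by
  simpa using (integral_withDensity_ofReal (Q := Q) hg hg0 fun _ => (1 : ℝ)).symm

lemma integral_sub_const_mul_density_sub (hg₁ : Measurable g₁) (hg₂ : Measurable g₂)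
    (hg₁0 : ∀ x, 0 ≤ g₁ x) (hg₂0 : ∀ x, 0 ≤ g₂ x)
    [IsProbabilityMeasure (Q.withDensity fun x => ENNReal.ofReal (g₁ x))]
    [IsProbabilityMeasure (Q.withDensity fun x => ENNReal.ofReal (g₂ x))]
    {φ : X → ℝ} (hφ : AEStronglyMeasurable φ Q) {C : ℝ} (hφC : ∀ x, |φ x| ≤ C) (c : ℝ) :
    ∫ x, (φ x - c) * (g₁ x - g₂ x) ∂Q =
      ∫ x, φ x ∂Q.withDensity (fun x => ENNReal.ofReal (g₁ x)) -
        ∫ x, φ x ∂Q.withDensity (fun x => ENNReal.ofReal (g₂ x)) := by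
  have hi₁ := integrable_of_isProbabilityMeasure_withDensity (Q := Q) hg₁ hg₁0
  have hi₂ := integrable_of_isProbabilityMeasure_withDensity (Q := Q) hg₂ hg₂0
  have hφC' : ∀ᵐ x ∂Q, ‖φ x‖ ≤ C := ae_of_all _ hφC
  have hi₁φ : Integrable (fun x => g₁ x * φ x) Q := hi₁.mul_bdd hφ hφC'
  have hi₂φ : Integrable (fun x => g₂ x * φ x) Q := hi₂.mul_bdd hφ hφC'
  have hdiff : Integrable (fun x => g₁ x * φ x - g₂ x * φ x) Q := hi₁φ.sub hi₂φ
  have hconst : Integrable (fun x => c * (g₁ x - g₂ x)) Q := (hi₁.sub hi₂).const_mul c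
  have hexpand : (fun x => (φ x - c) * (g₁ x - g₂ x)) =
      fun x => (g₁ x * φ x - g₂ x * φ x) - c * (g₁ x - g₂ x) := by
    funext x; ring
  rw [hexpand, integral_sub hdiff hconst, integral_sub hi₁φ hi₂φ, integral_const_mul,
    integral_sub hi₁ hi₂, integral_eq_one_of_isProbabilityMeasure_withDensity hg₁ hg₁0,
    integral_eq_one_of_isProbabilityMeasure_withDensity hg₂ hg₂0,
    integral_withDensity_ofReal hg₁ hg₁0, integral_withDensity_ofReal hg₂ hg₂0]
  ring

end Density

section Features

variable {X : Type*} [MeasurableSpace X] {H : Type*} [NormedAddCommGroup H]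
  [InnerProductSpace ℝ H] (Q : Measure X) (Φ : X → H)

/-- The paper's `e - Q e` for the RKHS element `e = ⟪v, Φ ·⟫`. -/
noncomputable def centeredFeature (v : H) (x : X) : ℝ :=
  ⟪v, Φ x⟫ - ∫ y, ⟪v, Φ y⟫ ∂Q

variable {Q Φ}

lemma abs_inner_le_mul_sqrt_of_norm_sq_le {v w : H} {M : ℝ} (hw : ‖w‖ ^ 2 ≤ M) :
    |⟪v, w⟫| ≤ ‖v‖ * √M :=
  (abs_real_inner_le_norm v w).trans <|
    mul_le_mul_of_nonneg_left ((Real.abs_le_sqrt hw).trans_eq' (abs_norm w)) (norm_nonneg v)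

lemma memLp_centeredFeature [IsFiniteMeasure Q] {M : ℝ} (hbdd : ∀ x, ‖Φ x‖ ^ 2 ≤ M)
    {v : H} (hmeas : Measurable fun x => ⟪v, Φ x⟫) : MemLp (centeredFeature Q Φ v) 2 Q :=
  (MemLp.of_bound hmeas.aestronglyMeasurable (‖v‖ * √M)
    (ae_of_all _ fun x => abs_inner_le_mul_sqrt_of_norm_sq_le (hbdd x))).sub (memLp_const _)

lemma integral_normalized_centeredFeature_mul {Cov : H →L[ℝ] H}
    (hcov : ∀ f g : H, ⟪f, Cov g⟫ = ∫ x, centeredFeature Q Φ f x * centeredFeature Q Φ g x ∂Q)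
    {ι : Type*} [DecidableEq ι] {lam : ι → ℝ} (hpos : ∀ p, 0 < lam p) {e : ι → H}
    (hon : Orthonormal ℝ e) (heig : ∀ p, Cov (e p) = lam p • e p) (p q : ι) :
    ∫ x, (√(lam p))⁻¹ * centeredFeature Q Φ (e p) x *
        ((√(lam q))⁻¹ * centeredFeature Q Φ (e q) x) ∂Q = if p = q then 1 else 0 := by
  have hrearrange : (fun x => (√(lam p))⁻¹ * centeredFeature Q Φ (e p) x *
      ((√(lam q))⁻¹ * centeredFeature Q Φ (e q) x)) = fun x => (√(lam p))⁻¹ * (√(lam q))⁻¹ *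
        (centeredFeature Q Φ (e p) x * centeredFeature Q Φ (e q) x) := by
    funext x; ring
  rw [hrearrange, integral_const_mul, ← hcov, heig, real_inner_smul_right,
    orthonormal_iff_ite.mp hon]
  split_ifs with hpq
  · subst hpq
    rw [← mul_inv, Real.mul_self_sqrt (hpos p).le, mul_one, inv_mul_cancel₀ (hpos p).ne']
  · simp

end Features

theorem stmt_10_general
    {X : Type*} [MeasurableSpace X] (Q : Measure X) [IsProbabilityMeasure Q]
    {H : Type*} [NormedAddCommGroup H] [InnerProductSpace ℝ H]
    (Φ : X → H) (M : ℝ) (hbdd : ∀ x, ‖Φ x‖ ^ 2 ≤ M)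
    (hmeas : ∀ f : H, Measurable fun x => ⟪f, Φ x⟫)
    (Cov : H →L[ℝ] H)
    (hcov : ∀ f g : H, ⟪f, Cov g⟫ =
      ∫ x, (⟪f, Φ x⟫ - ∫ y, ⟪f, Φ y⟫ ∂Q) * (⟪g, Φ x⟫ - ∫ y, ⟪g, Φ y⟫ ∂Q) ∂Q)
    (lam : ℕ → ℝ) (hpos : ∀ p, 0 < lam p)
    (e : ℕ → H) (hon : Orthonormal ℝ e) (heig : ∀ p, Cov (e p) = lam p • e p)
    (g1 g2 : X → ℝ) (hg1 : Measurable g1) (hg2 : Measurable g2)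
    (hg1nn : ∀ x, 0 ≤ g1 x) (hg2nn : ∀ x, 0 ≤ g2 x)
    (P1 P2 : Measure X) [IsProbabilityMeasure P1] [IsProbabilityMeasure P2]
    (hP1 : P1 = Q.withDensity fun x => ENNReal.ofReal (g1 x))
    (hP2 : P2 = Q.withDensity fun x => ENNReal.ofReal (g2 x))
    (μ1 μ2 : H)
    (hμ1 : ∀ f : H, ⟪f, μ1⟫ = ∫ x, ⟪f, Φ x⟫ ∂P1)
    (hμ2 : ∀ f : H, ⟪f, μ2⟫ = ∫ x, ⟪f, Φ x⟫ ∂P2) :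
    (∑' p, ENNReal.ofReal ((lam p)⁻¹ * ⟪e p, μ2 - μ1⟫ ^ 2)) ≤
      ∫⁻ x, ENNReal.ofReal ((g1 x - g2 x) ^ 2) ∂Q := by
  subst hP1 hP2
  have hcoef (p : ℕ) : (lam p)⁻¹ * ⟪e p, μ2 - μ1⟫ ^ 2 =
      (∫ x, (√(lam p))⁻¹ * centeredFeature Q Φ (e p) x * (g1 x - g2 x) ∂Q) ^ 2 := by
    simp only [mul_assoc, integral_const_mul, centeredFeature]
    rw [integral_sub_const_mul_density_sub hg1 hg2 hg1nn hg2nn (hmeas (e p)).aestronglyMeasurable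
      fun x => abs_inner_le_mul_sqrt_of_norm_sq_le (hbdd x), ← hμ1, ← hμ2, mul_pow, inv_pow,
      Real.sq_sqrt (hpos p).le, inner_sub_right]
    ring
  simp only [hcoef]
  exact tsum_ofReal_sq_integral_mul_le_lintegral_sq
    (fun p => (memLp_centeredFeature hbdd (hmeas (e p))).const_mul _)
    (integral_normalized_centeredFeature_mul hcov hpos hon heig) (hg1.sub hg2).aestronglyMeasurable

/-- Bessel-type inequality
`∑_p λ_p⁻¹ ⟨e_p, μ₂-μ₁⟩² ≤ ‖dP₁/dQ - dP₂/dQ‖²_{L²(Q)}`, without assuming density of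
the RKHS in `L²(Q)`; stated in `ℝ≥0∞` so that no summability/integrability assumptions
are needed. -/
theorem stmt_10
    {X : Type*} [MeasurableSpace X] (Q : Measure X) [IsProbabilityMeasure Q]
    {H : Type*} [NormedAddCommGroup H] [InnerProductSpace ℝ H] [CompleteSpace H]
    (Φ : X → H) (M : ℝ) (hbdd : ∀ x, ‖Φ x‖ ^ 2 ≤ M)
    (hmeas : ∀ f : H, Measurable fun x => ⟪f, Φ x⟫)
    (Cov : H →L[ℝ] H)
    (hcov : ∀ f g : H, ⟪f, Cov g⟫ =
      ∫ x, (⟪f, Φ x⟫ - ∫ y, ⟪f, Φ y⟫ ∂Q) * (⟪g, Φ x⟫ - ∫ y, ⟪g, Φ y⟫ ∂Q) ∂Q)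
    (lam : ℕ → ℝ) (hpos : ∀ p, 0 < lam p)
    (e : ℕ → H) (hon : Orthonormal ℝ e) (heig : ∀ p, Cov (e p) = lam p • e p)
    (g1 g2 : X → ℝ) (hg1 : Measurable g1) (hg2 : Measurable g2)
    (hg1nn : ∀ x, 0 ≤ g1 x) (hg2nn : ∀ x, 0 ≤ g2 x)
    (P1 P2 : Measure X) [IsProbabilityMeasure P1] [IsProbabilityMeasure P2]
    (hP1 : P1 = Q.withDensity fun x => ENNReal.ofReal (g1 x))
    (hP2 : P2 = Q.withDensity fun x => ENNReal.ofReal (g2 x))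
    (μ1 μ2 : H)
    (hμ1 : ∀ f : H, ⟪f, μ1⟫ = ∫ x, ⟪f, Φ x⟫ ∂P1)
    (hμ2 : ∀ f : H, ⟪f, μ2⟫ = ∫ x, ⟪f, Φ x⟫ ∂P2) :
    (∑' p, ENNReal.ofReal ((lam p)⁻¹ * ⟪e p, μ2 - μ1⟫ ^ 2)) ≤
      ∫⁻ x, ENNReal.ofReal ((g1 x - g2 x) ^ 2) ∂Q :=
  stmt_10_general Q Φ M hbdd hmeas Cov hcov lam hpos e hon heig g1 g2 hg1 hg2 hg1nn hg2nn P1 P2 hP1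
    hP2 μ1 μ2 hμ1 hμ2
end

section
/- Let $\mu_i\leq e^{-\delta i}$ for $i\geq 1$ and $\delta>0$, and consider the multiset of products $\{\mu_{i_1}\cdots\mu_{i_d} : i_1,\dots,i_d\geq 1\}$ arranged in non-increasing order as $\lambda_1\geq\lambda_2\geq\cdots$. Then $\lambda_n \leq e^{-\delta n^{1/d}}$ for all $n\geq 1$. -/
/-!
Only `k ^ d` tuples in `ℕ^d` have all entries below `k`, so among the indices of the `n` largest
products some tuple has an entry, hence an exponent sum, of size at least `n ^ (1/d)`. Since
`λ` is non-increasing, `λ_n` is at most that product, which is `≤ e^{-δ · (exponent sum)}`.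
-/

open Finset

theorem Finset.exists_le_apply_of_pow_card_lt_card {ι : Type*} [Fintype ι] [DecidableEq ι]
    {s : Finset (ι → ℕ)} {k : ℕ} (hs : k ^ Fintype.card ι < #s) : ∃ x ∈ s, ∃ i, k ≤ x i := by
  by_contra! h
  have hsub : s ⊆ Fintype.piFinset fun _ => range k := fun x hx =>
    Fintype.mem_piFinset.2 fun i => mem_range.2 (h x hx i)
  have := card_le_card hsub
  simp only [Fintype.card_piFinset, card_range, prod_const, card_univ] at this
  omega

theorem Finset.exists_rpow_le_apply_add_one {ι : Type*} [Fintype ι] [DecidableEq ι] [Nonempty ι]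
    {s : Finset (ι → ℕ)} (hs : s.Nonempty) :
    ∃ x ∈ s, ∃ i, (#s : ℝ) ^ (1 / (Fintype.card ι : ℝ)) ≤ x i + 1 := by
  set d := Fintype.card ι
  set r : ℝ := (#s : ℝ) ^ (1 / (d : ℝ))
  have hr : 0 < r := by have := hs.card_pos; positivity
  have hrd : r ^ d = #s := by
    rw [← Real.rpow_natCast, ← Real.rpow_mul (by positivity),
      one_div_mul_cancel (by simp [d, Fintype.card_ne_zero]), Real.rpow_one]
  have hceil : 1 ≤ ⌈r⌉₊ := Nat.one_le_ceil_iff.2 hr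
  -- `⌈r⌉₊ - 1` is the largest natural number strictly below `r`
  have hk : ((⌈r⌉₊ - 1 : ℕ) : ℝ) < r := by
    rw [Nat.cast_sub hceil, Nat.cast_one]
    linarith [Nat.ceil_lt_add_one hr.le]
  have hcard : (⌈r⌉₊ - 1) ^ d < #s := by
    have : ((⌈r⌉₊ - 1 : ℕ) : ℝ) ^ d < r ^ d :=
      pow_lt_pow_left₀ hk (by positivity) Fintype.card_ne_zero
    rw [hrd] at this
    exact_mod_cast this
  obtain ⟨x, hx, i, hxi⟩ := exists_le_apply_of_pow_card_lt_card hcard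
  refine ⟨x, hx, i, (Nat.le_ceil r).trans ?_⟩
  exact_mod_cast (by omega : ⌈r⌉₊ ≤ x i + 1)

theorem prod_le_exp_neg_mul_sum {ι : Type*} (s : Finset ι) {μ : ℕ → ℝ} {δ : ℝ}
    (hμnn : ∀ i, 0 ≤ μ i) (hμ : ∀ i : ℕ, 1 ≤ i → μ i ≤ Real.exp (-δ * i))
    {x : ι → ℕ} (hx : ∀ j, 1 ≤ x j) :
    ∏ j ∈ s, μ (x j) ≤ Real.exp (-δ * ∑ j ∈ s, (x j : ℝ)) :=
  calc ∏ j ∈ s, μ (x j) ≤ ∏ j ∈ s, Real.exp (-δ * x j) :=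
        prod_le_prod (fun j _ => hμnn _) (fun j _ => hμ _ (hx j))
    _ = Real.exp (-δ * ∑ j ∈ s, (x j : ℝ)) := by rw [← Real.exp_sum, mul_sum]

/-- if `μ_i ≤ e^{-δ i}` (with `μ_i ≥ 0`) and `λ` is a non-increasing
enumeration (via a bijection `σ : ℕ ≃ (Fin d → ℕ)`, positive indices `σ n j + 1`) of the
multiset of `d`-fold products `μ_{i₁} ⋯ μ_{i_d}`, then the `n`-th largest value
satisfies `λ_n ≤ e^{-δ n^{1/d}}` (here `λ` is 0-indexed, so `λ (n-1) ≤ e^{-δ n^{1/d}}`). -/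
theorem stmt_19 (d : ℕ) (hd : 1 ≤ d) (δ : ℝ) (hδ : 0 < δ)
    (μ : ℕ → ℝ) (hμnn : ∀ i, 0 ≤ μ i)
    (hμ : ∀ i : ℕ, 1 ≤ i → μ i ≤ Real.exp (-δ * i))
    (σ : ℕ ≃ (Fin d → ℕ))
    (lam : ℕ → ℝ) (hlam : ∀ n, lam n = ∏ j : Fin d, μ (σ n j + 1))
    (hmono : Antitone lam) :
    ∀ n : ℕ, 1 ≤ n → lam (n - 1) ≤ Real.exp (-δ * (n : ℝ) ^ (1 / (d : ℝ))) := by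
  intro n hn
  have : Nonempty (Fin d) := ⟨⟨0, hd⟩⟩
  have hcard : #((range n).map σ.toEmbedding) = n := by simp
  have hne : ((range n).map σ.toEmbedding).Nonempty := by
    rw [map_nonempty, nonempty_range_iff]; omega
  obtain ⟨x, hx, i, hxi⟩ := exists_rpow_le_apply_add_one hne
  obtain ⟨m, hm, rfl⟩ := mem_map.1 hx
  rw [hcard, Fintype.card_fin] at hxi
  have hsum : (σ m i : ℝ) + 1 ≤ ∑ j, ((σ m j + 1 : ℕ) : ℝ) := by
    exact_mod_cast single_le_sum (f := fun j => σ m j + 1) (by simp) (mem_univ i)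
  calc lam (n - 1) ≤ lam m := hmono (by rw [mem_range] at hm; omega)
    _ ≤ Real.exp (-δ * ∑ j, ((σ m j + 1 : ℕ) : ℝ)) := by
        rw [hlam]; exact prod_le_exp_neg_mul_sum _ hμnn hμ (fun _ => by omega)
    _ ≤ Real.exp (-δ * (n : ℝ) ^ (1 / (d : ℝ))) := by
        simp only [Equiv.coe_toEmbedding] at hxi
        rw [Real.exp_le_exp, neg_mul, neg_mul, neg_le_neg_iff]
        exact mul_le_mul_of_nonneg_left (hxi.trans hsum) hδ.le
end
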